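/- Let p be a nonzero polynomial on R^n and S ⊆ R^n a bounded measurable set. The function F_S(p) = vol({x ∈ S : p(x) > 0}) − vol({x ∈ S : p(x) < 0}) is continuous on P_k \ {0} (with respect to the coefficient topology), odd (F_S(−p) = −F_S(p)), and invariant under multiplication of p by positive scalars. -/

import Mathlib

open MeasureTheory Filter

/-- `F_S(p) = vol({x ∈ S : p(x) > 0}) − vol({x ∈ S : p(x) < 0})`. -/
noncomputable def bisectFn (n : ℕ) (S : Set (EuclideanSpace ℝ (Fin n)))
    (p : MvPolynomial (Fin n) ℝ) : ℝ :=
  (volume {x | x ∈ S ∧ 0 < MvPolynomial.eval (fun i => x i) p}).toReal -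
  (volume {x | x ∈ S ∧ MvPolynomial.eval (fun i => x i) p < 0}).toReal

lemma cons_continuous (n : ℕ) : Continuous (fun z : (Fin n → ℝ) × ℝ => (Fin.cons z.2 z.1 : Fin (n+1) → ℝ)) := by
  refine continuous_pi fun i => ?_
  refine Fin.cases ?_ (fun j => ?_) i
  · simpa using continuous_snd
  · simp only [Fin.cons_succ]
    exact (continuous_apply j).comp continuous_fst

lemma null_zero_set : ∀ (n : ℕ) (p : MvPolynomial (Fin n) ℝ), p ≠ 0 →
    volume {x : Fin n → ℝ | MvPolynomial.eval x p = 0} = 0 := by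
  intro n
  induction n with
  | zero =>
    intro p hp
    obtain ⟨a, rfl⟩ := MvPolynomial.C_surjective (Fin 0) p
    have ha : a ≠ 0 := by simpa using hp
    have : {x : Fin 0 → ℝ | MvPolynomial.eval x (MvPolynomial.C a) = 0} = ∅ := by
      ext x; simp [ha]
    rw [this]; simp
  | succ n ih =>
    intro p hp
    set q := MvPolynomial.finSuccEquiv ℝ n p with hq
    have hq0 : q ≠ 0 := by
      simp only [hq, ne_eq, EmbeddingLike.map_eq_zero_iff]; exact hp
    -- measure preserving map T (s, y) = Fin.cons y s
    have mp1 := (measurePreserving_piFinSuccAbove (fun _ : Fin (n+1) => (volume : Measure ℝ)) 0).symm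
    have mpT : MeasurePreserving
        (fun z : (Fin n → ℝ) × ℝ => (Fin.cons z.2 z.1 : Fin (n+1) → ℝ))
        (volume.prod volume) volume := by
      have := mp1.comp (Measure.measurePreserving_swap (μ := (volume : Measure (Fin n → ℝ))) (ν := (volume : Measure ℝ)))
      convert this using 1
      · rfl
      · funext z
        show (Fin.cons z.2 z.1 : Fin (n+1) → ℝ) = (MeasurableEquiv.piFinSuccAbove (fun _ => ℝ) 0).symm (z.2, z.1)
        rw [MeasurableEquiv.piFinSuccAbove_symm_apply]
        exact (Fin.insertNth_zero' z.2 z.1).symm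
      · rfl
    have hZm : MeasurableSet {x : Fin (n+1) → ℝ | MvPolynomial.eval x p = 0} :=
      (MvPolynomial.continuous_eval p).measurable (measurableSet_singleton 0)
    rw [← mpT.measure_preimage hZm.nullMeasurableSet]
    have hZ''m : MeasurableSet ((fun z : (Fin n → ℝ) × ℝ => (Fin.cons z.2 z.1 : Fin (n+1) → ℝ)) ⁻¹' {x | MvPolynomial.eval x p = 0}) :=
      ((MvPolynomial.continuous_eval p).comp (cons_continuous n)).measurable (measurableSet_singleton 0)
    rw [Measure.measure_prod_null hZ''m]
    have hlead : q.leadingCoeff ≠ 0 := Polynomial.leadingCoeff_ne_zero.mpr hq0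
    filter_upwards [MeasureTheory.measure_eq_zero_iff_ae_notMem.mp (ih q.leadingCoeff hlead)] with s hs
    have hr0 : q.map (MvPolynomial.eval s) ≠ 0 := by
      intro h
      apply hs
      have h2 : Polynomial.coeff (q.map (MvPolynomial.eval s)) q.natDegree = 0 := by
        rw [h]; simp
      rw [Polynomial.coeff_map] at h2
      show MvPolynomial.eval s q.leadingCoeff = 0
      exact h2
    have : Prod.mk s ⁻¹' ((fun z : (Fin n → ℝ) × ℝ => (Fin.cons z.2 z.1 : Fin (n+1) → ℝ)) ⁻¹' {x | MvPolynomial.eval x p = 0})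
        = {y : ℝ | Polynomial.IsRoot (q.map (MvPolynomial.eval s)) y} := by
      ext y
      simp only [Set.mem_preimage, Set.mem_setOf_eq, Polynomial.IsRoot]
      rw [MvPolynomial.eval_eq_eval_mv_eval']
    simp only [Pi.zero_apply]
    rw [this]
    exact Set.Finite.measure_zero (Polynomial.finite_setOf_isRoot hr0) volume

lemma null_zero_setE (n : ℕ) (p : MvPolynomial (Fin n) ℝ) (hp : p ≠ 0) :
    volume {x : EuclideanSpace ℝ (Fin n) | MvPolynomial.eval (fun i => x i) p = 0} = 0 := by
  have mp := EuclideanSpace.volume_preserving_symm_measurableEquiv_toLp (Fin n)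
  have hZm : MeasurableSet {x : Fin n → ℝ | MvPolynomial.eval x p = 0} :=
    (MvPolynomial.continuous_eval p).measurable (measurableSet_singleton 0)
  have := mp.measure_preimage hZm.nullMeasurableSet
  rw [null_zero_set n p hp] at this
  convert this using 2
  rfl

lemma eval_tendsto (n k : ℕ) (p : MvPolynomial (Fin n) ℝ) (q : ℕ → MvPolynomial (Fin n) ℝ)
    (hpk : p.totalDegree ≤ k) (hqk : ∀ m, (q m).totalDegree ≤ k)
    (hc : ∀ d : Fin n →₀ ℕ, Tendsto (fun m => (q m).coeff d) atTop (nhds (p.coeff d)))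
    (x : Fin n → ℝ) :
    Tendsto (fun m => MvPolynomial.eval x (q m)) atTop (nhds (MvPolynomial.eval x p)) := by
  classical
  set D : Finset (Fin n →₀ ℕ) := Finset.Iic (Finsupp.equivFunOnFinite.symm fun _ : Fin n => k) with hD
  have key : ∀ r : MvPolynomial (Fin n) ℝ, r.totalDegree ≤ k →
      MvPolynomial.eval x r = ∑ d ∈ D, r.coeff d * ∏ i, x i ^ d i := by
    intro r hr
    rw [MvPolynomial.eval_eq']
    refine Finset.sum_subset ?_ ?_
    · intro d hd
      rw [hD, Finset.mem_Iic, Finsupp.le_iff]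
      intro i _
      calc d i ≤ d.sum fun _ e => e := by
              by_cases h : i ∈ d.support
              · exact Finset.single_le_sum (fun j _ => Nat.zero_le _) h
              · simp [Finsupp.notMem_support_iff.mp h]
        _ ≤ r.totalDegree := MvPolynomial.le_totalDegree hd
        _ ≤ k := hr
    · intro d _ hd
      rw [MvPolynomial.notMem_support_iff.mp hd, zero_mul]
  rw [key p hpk]
  have : (fun m => MvPolynomial.eval x (q m))
      = fun m => ∑ d ∈ D, (q m).coeff d * ∏ i, x i ^ d i := by
    funext m; exact key (q m) (hqk m)
  rw [this]
  exact tendsto_finset_sum _ fun d _ => (hc d).mul tendsto_const_nhds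

lemma toReal_tendsto {n : ℕ} {S : Set (EuclideanSpace ℝ (Fin n))}
    (hSb : Bornology.IsBounded S)
    {A : ℕ → Set (EuclideanSpace ℝ (Fin n))} {B : Set (EuclideanSpace ℝ (Fin n))}
    (hA : ∀ m, MeasurableSet (A m)) (hB : MeasurableSet B)
    (hAS : ∀ m, A m ⊆ S) (hBS : B ⊆ S)
    (hae : ∀ᵐ x, ∀ᶠ m in atTop, (x ∈ A m ↔ x ∈ B)) :
    Tendsto (fun m => (volume (A m)).toReal) atTop (nhds (volume B).toReal) := by
  have hmeas : volume (closure S) ≠ ⊤ := hSb.closure.measure_lt_top.ne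
  have h1 : ∀ m, (volume (A m)).toReal = ∫ x, (A m).indicator (fun _ => (1:ℝ)) x :=
    fun m => (integral_indicator_one (hA m)).symm
  have h2 : (volume B).toReal = ∫ x, B.indicator (fun _ => (1:ℝ)) x :=
    (integral_indicator_one hB).symm
  simp only [h1, h2]
  refine tendsto_integral_of_dominated_convergence
    ((closure S).indicator fun _ => (1:ℝ)) ?_ ?_ ?_ ?_
  · exact fun m => ((measurable_indicator_const_iff 1).mpr (hA m)).aestronglyMeasurable
  · rw [integrable_indicator_iff isClosed_closure.measurableSet]
    exact (integrableOn_const_iff).mpr (Or.inr hSb.closure.measure_lt_top)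
  · intro m
    filter_upwards with x
    by_cases hx : x ∈ A m
    · have : x ∈ closure S := subset_closure (hAS m hx)
      simp [Set.indicator_of_mem hx, Set.indicator_of_mem this]
    · rw [Set.indicator_of_notMem hx]
      simp only [norm_zero]
      exact Set.indicator_apply_nonneg fun _ => zero_le_one
  · filter_upwards [hae] with x hx
    refine tendsto_const_nhds.congr' ?_
    filter_upwards [hx] with m hm
    by_cases hb : x ∈ B
    · simp [Set.indicator_of_mem hb, Set.indicator_of_mem (hm.mpr hb)]
    · simp [Set.indicator_of_notMem hb, Set.indicator_of_notMem (fun h => hb (hm.mp h))]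


/-- For a bounded measurable `S`, the function `F_S` is odd, invariant under
multiplication by positive scalars, and (sequentially) continuous at every nonzero
polynomial of degree at most `k`, in the topology of convergence of coefficients. -/
theorem stmt_15 (n k : ℕ) (S : Set (EuclideanSpace ℝ (Fin n)))
    (hSb : Bornology.IsBounded S) (hSm : MeasurableSet S) :
    (∀ p : MvPolynomial (Fin n) ℝ, bisectFn n S (-p) = -bisectFn n S p) ∧
    (∀ (p : MvPolynomial (Fin n) ℝ) (c : ℝ), 0 < c → bisectFn n S (c • p) = bisectFn n S p) ∧
    (∀ (p : MvPolynomial (Fin n) ℝ) (q : ℕ → MvPolynomial (Fin n) ℝ),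
      p ≠ 0 → p.totalDegree ≤ k → (∀ m, (q m).totalDegree ≤ k) →
      (∀ d : Fin n →₀ ℕ, Tendsto (fun m => (q m).coeff d) atTop (nhds (p.coeff d))) →
      Tendsto (fun m => bisectFn n S (q m)) atTop (nhds (bisectFn n S p))) := by
  have hcoords : Continuous (fun (x : EuclideanSpace ℝ (Fin n)) => (fun i => x i : Fin n → ℝ)) :=
    PiLp.continuous_ofLp 2 (fun _ : Fin n => ℝ)
  have hcont : ∀ r : MvPolynomial (Fin n) ℝ,
      Continuous (fun x : EuclideanSpace ℝ (Fin n) => MvPolynomial.eval (fun i => x i) r) :=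
    fun r => (MvPolynomial.continuous_eval r).comp hcoords
  refine ⟨?_, ?_, ?_⟩
  · intro p
    unfold bisectFn
    have h1 : {x | x ∈ S ∧ 0 < MvPolynomial.eval (fun i => x i) (-p)}
        = {x | x ∈ S ∧ MvPolynomial.eval (fun i => x i) p < 0} := by
      ext x; simp [map_neg, neg_pos]
    have h2 : {x | x ∈ S ∧ MvPolynomial.eval (fun i => x i) (-p) < 0}
        = {x | x ∈ S ∧ 0 < MvPolynomial.eval (fun i => x i) p} := by
      ext x; simp [map_neg, neg_neg, neg_lt_zero]
    rw [h1, h2]; ring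
  · intro p c hc
    unfold bisectFn
    have hpos : ∀ e : ℝ, (0 < c * e ↔ 0 < e) := by
      intro e; constructor <;> intro h <;> nlinarith
    have hneg : ∀ e : ℝ, (c * e < 0 ↔ e < 0) := by
      intro e; constructor <;> intro h <;> nlinarith
    have h1 : {x | x ∈ S ∧ 0 < MvPolynomial.eval (fun i => x i) (c • p)}
        = {x | x ∈ S ∧ 0 < MvPolynomial.eval (fun i => x i) p} := by
      ext x; simp [MvPolynomial.smul_eval, hpos]
    have h2 : {x | x ∈ S ∧ MvPolynomial.eval (fun i => x i) (c • p) < 0}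
        = {x | x ∈ S ∧ MvPolynomial.eval (fun i => x i) p < 0} := by
      ext x; simp [MvPolynomial.smul_eval, hneg]
    rw [h1, h2]
  · intro p q hp hpk hqk hcoef
    have hmpos : ∀ r : MvPolynomial (Fin n) ℝ,
        MeasurableSet {x | x ∈ S ∧ 0 < MvPolynomial.eval (fun i => x i) r} :=
      fun r => hSm.inter ((hcont r).measurable measurableSet_Ioi)
    have hmneg : ∀ r : MvPolynomial (Fin n) ℝ,
        MeasurableSet {x | x ∈ S ∧ MvPolynomial.eval (fun i => x i) r < 0} :=
      fun r => hSm.inter ((hcont r).measurable measurableSet_Iio)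
    have hsub : ∀ r : MvPolynomial (Fin n) ℝ,
        {x | x ∈ S ∧ 0 < MvPolynomial.eval (fun i => x i) r} ⊆ S := fun r x hx => hx.1
    have hsub' : ∀ r : MvPolynomial (Fin n) ℝ,
        {x | x ∈ S ∧ MvPolynomial.eval (fun i => x i) r < 0} ⊆ S := fun r x hx => hx.1
    have het : ∀ x : EuclideanSpace ℝ (Fin n),
        Tendsto (fun m => MvPolynomial.eval (fun i => x i) (q m)) atTop
          (nhds (MvPolynomial.eval (fun i => x i) p)) :=
      fun x => eval_tendsto n k p q hpk hqk hcoef (fun i => x i)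
    have hae0 := MeasureTheory.measure_eq_zero_iff_ae_notMem.mp (null_zero_setE n p hp)
    have haepos : ∀ᵐ x : EuclideanSpace ℝ (Fin n), ∀ᶠ m in atTop,
        (x ∈ {x | x ∈ S ∧ 0 < MvPolynomial.eval (fun i => x i) (q m)} ↔
         x ∈ {x | x ∈ S ∧ 0 < MvPolynomial.eval (fun i => x i) p}) := by
      filter_upwards [hae0] with x hx
      have hx' : MvPolynomial.eval (fun i => x i) p ≠ 0 := hx
      rcases hx'.lt_or_gt with h | h
      · filter_upwards [(het x).eventually (eventually_lt_nhds h)] with m hm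
        constructor
        · rintro ⟨-, h0⟩; exact absurd (h0.trans hm) (lt_irrefl 0)
        · rintro ⟨-, h0⟩; exact absurd (h0.trans h) (lt_irrefl 0)
      · filter_upwards [(het x).eventually (eventually_gt_nhds h)] with m hm
        exact and_congr_right fun _ => iff_of_true hm h
    have haeneg : ∀ᵐ x : EuclideanSpace ℝ (Fin n), ∀ᶠ m in atTop,
        (x ∈ {x | x ∈ S ∧ MvPolynomial.eval (fun i => x i) (q m) < 0} ↔
         x ∈ {x | x ∈ S ∧ MvPolynomial.eval (fun i => x i) p < 0}) := by
      filter_upwards [hae0] with x hx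
      have hx' : MvPolynomial.eval (fun i => x i) p ≠ 0 := hx
      rcases hx'.lt_or_gt with h | h
      · filter_upwards [(het x).eventually (eventually_lt_nhds h)] with m hm
        exact and_congr_right fun _ => iff_of_true hm h
      · filter_upwards [(het x).eventually (eventually_gt_nhds h)] with m hm
        constructor
        · rintro ⟨-, h0⟩; exact absurd (hm.trans h0) (lt_irrefl 0)
        · rintro ⟨-, h0⟩; exact absurd (h.trans h0) (lt_irrefl 0)
    have t1 := toReal_tendsto hSb (fun m => hmpos (q m)) (hmpos p)
      (fun m => hsub (q m)) (hsub p) haepos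
    have t2 := toReal_tendsto hSb (fun m => hmneg (q m)) (hmneg p)
      (fun m => hsub' (q m)) (hsub' p) haeneg
    exact t1.sub t2
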